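/- arXiv:2509.23956 — 6 statements merged into one kernel-verified Lean document; each statement's English description precedes it below -/
import Mathlib

section
/- Let F be a field, let D be a finite-dimensional division F-algebra with center F that is not equal to F (i.e., D is a central division F-algebra of degree n > 1), let m ∈ ℕ, and let A = M_m(D) be the algebra of m×m matrices over D. Let τ : A → F be a nonzero F-linear functional and H = ker τ its kernel (a hyperplane of A). Then every element a ∈ A can be written as a = h₁h₂ for some h₁, h₂ ∈ H. -/
/-!
Since `D` is not commutative, Wedderburn's little theorem makes `F` infinite. Over an infinite
field, a linear space `U` of matrices in `Mₘ(D)` containing no unit has codimension at least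
`dim_F D`: if `x ∈ U` has maximal rank (acting on row vectors), then every `y ∈ U` maps `ker x`
into `im x`, so for `0 ≠ v ∈ ker x` the map `y ↦ v y mod im x` vanishes on `U`; it is onto, and
`ker x ⊇ D v`.

Now let `K` be the centralizer of a noncentral `q`, a division subalgebra with
`2 ≤ dim K < dim D`. The space `U = {u | τ (a k u) = 0 for all k ∈ K}` has codimension at most
`dim K`, so it contains a unit `u`; picking `0 ≠ j ∈ K` with `τ (u⁻¹ j) = 0` gives
`a = (a j⁻¹ u) (u⁻¹ j)`.
-/

open Module LinearMap

theorem Module.End.exists_injective_one_add_smul {F V : Type*} [Field F] [Infinite F]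
    [AddCommGroup V] [Module F V] [FiniteDimensional F V] (u : Module.End F V) :
    ∃ t : F, t ≠ 0 ∧ Function.Injective ((1 : Module.End F V) + t • u) := by
  have hbad : {t : F | u.HasEigenvalue (-t⁻¹)}.Finite :=
    u.finite_hasEigenvalue.preimage fun _ _ _ _ h => inv_injective (neg_injective h)
  obtain ⟨t, ht⟩ := (hbad.union (Set.finite_singleton 0)).exists_notMem
  simp only [Set.mem_union, Set.mem_ofPred_eq, Set.mem_singleton_iff, not_or] at ht
  obtain ⟨hev, ht0⟩ := ht
  refine ⟨t, ht0, (injective_iff_map_eq_zero _).mpr fun x hx => ?_⟩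
  have hx : x + t • u x = 0 := hx
  have hx' : x ∈ u.eigenspace (-t⁻¹) := by
    rw [Module.End.mem_eigenspace_iff, ← smul_right_inj ht0, smul_smul, mul_neg,
      mul_inv_cancel₀ ht0]
    linear_combination (norm := module) hx
  rw [Module.End.hasEigenvalue_iff, not_not] at hev
  simpa [hev] using hx'

theorem Submodule.exists_linearMap_apply_add_smul_eq {F W : Type*} [Field F] [AddCommGroup W]
    [Module F W] {P : Submodule F W} {w : W} (hw : w ∉ P) :
    ∃ ψ : W →ₗ[F] P × F, ∀ (p : P) (c : F), ψ (p + c • w) = (p, c) := by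
  have hinj : ker (P.subtype.coprod (toSpanSingleton F W w)) = ⊥ := by
    rw [eq_bot_iff]
    rintro ⟨p, c⟩ h
    have h : (p : W) + c • w = 0 := h
    obtain rfl : c = 0 := by
      by_contra hc
      refine hw ((P.smul_mem_iff hc).mp ?_)
      rw [eq_neg_of_add_eq_zero_right h]
      exact P.neg_mem p.2
    simpa [Prod.ext_iff] using h
  obtain ⟨ψ, hψ⟩ := exists_leftInverse_of_injective _ hinj
  exact ⟨ψ, fun p c => LinearMap.congr_fun hψ (p, c)⟩

theorem LinearMap.apply_mem_range_of_finrank_range_add_smul_le {F V W : Type*} [Field F]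
    [Infinite F] [AddCommGroup V] [Module F V] [AddCommGroup W] [Module F W]
    [FiniteDimensional F W] (f g : V →ₗ[F] W)
    (hrk : ∀ t : F, finrank F (range (f + t • g)) ≤ finrank F (range f))
    {v : V} (hv : f v = 0) : g v ∈ range f := by
  by_contra hgv
  obtain ⟨ψ, hψ⟩ := Submodule.exists_linearMap_apply_add_smul_eq hgv
  obtain ⟨s, hs⟩ := f.rangeRestrict.exists_rightInverse_of_surjective f.range_rangeRestrict
  have hfs (w : range f) : f (s w) = w := congr_arg Subtype.val (LinearMap.congr_fun hs w)
  let B := ψ ∘ₗ g ∘ₗ s ∘ₗ fst F (range f) F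
  obtain ⟨t, ht, hinj⟩ := Module.End.exists_injective_one_add_smul B
  let L := (f + t • g) ∘ₗ s ∘ₗ fst F (range f) F + (snd F (range f) F).smulRight (g v)
  have hψL : ψ ∘ₗ L = 1 + t • B := by
    refine LinearMap.ext fun ⟨w, c⟩ => ?_
    have hLwc : L (w, c) = (w + c • g v) + t • g (s w) := by
      simp only [L, add_apply, coe_comp, Function.comp_apply, fst_apply, smul_apply,
        smulRight_apply, snd_apply, hfs]
      abel
    simp [B, hLwc, hψ]
  have hL : range L ≤ range (f + t • g) := by
    rintro _ ⟨⟨w, c⟩, rfl⟩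
    refine ⟨s w + (t⁻¹ * c) • v, ?_⟩
    simp [L, hv, smul_smul, ht, add_assoc]
  have hLinj : Function.Injective L := by
    rw [← hψL, coe_comp] at hinj
    exact hinj.of_comp
  have := calc
    finrank F (range f) + 1 = finrank F (range L) := by
      rw [finrank_range_of_inj hLinj, finrank_prod, finrank_self]
    _ ≤ finrank F (range (f + t • g)) := Submodule.finrank_mono hL
    _ ≤ finrank F (range f) := hrk t
  omega

namespace Matrix

variable {F D n : Type*} [Field F] [DivisionRing D] [Algebra F D] [Fintype n]

theorem finrank_le_finrank_ker_vecMul [FiniteDimensional F D] {m : Type*} {x : Matrix n m D}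
    {v : n → D} (hv : v ≠ 0) (hvx : v ᵥ* x = 0) :
    finrank F D ≤ finrank F (ker ((vecMulBilin F F).flip x)) := by
  have hmem (d : D) : d • v ∈ ker ((vecMulBilin F F).flip x) := by
    simp [smul_vecMul, hvx]
  exact finrank_le_finrank_of_injective
    (f := ((toSpanSingleton D (n → D) v).restrictScalars F).codRestrict _ hmem)
    fun _ _ h => smul_left_injective D hv (congr_arg Subtype.val h)

variable [DecidableEq n]

theorem exists_vecMul_eq {m : Type*} {v : n → D} (hv : v ≠ 0) (w : m → D) :
    ∃ y : Matrix n m D, v ᵥ* y = w := by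
  obtain ⟨i, hi⟩ := Function.ne_iff.mp hv
  exact ⟨vecMulVec (Pi.single i (v i)⁻¹) w, by
    rw [vecMul_vecMulVec, dotProduct_single, mul_inv_cancel₀ hi, one_smul]⟩

theorem isUnit_of_forall_vecMul_eq_zero {x : Matrix n n D}
    (hx : ∀ v : n → D, v ᵥ* x = 0 → v = 0) : IsUnit x := by
  rw [IsArtinianRing.isUnit_iff_isRightRegular, isRightRegular_iff_left_eq_zero_of_mul]
  exact fun y hy => funext fun i => hx (y i) (congr_fun hy i)

theorem finrank_add_finrank_le_of_forall_not_isUnit [Infinite F] [FiniteDimensional F D]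
    (U : Submodule F (Matrix n n D)) (hU : ∀ x ∈ U, ¬IsUnit x) :
    finrank F U + finrank F D ≤ finrank F (Matrix n n D) := by
  let L := (vecMulBilin (m := n) (n := n) (A := D) F F).flip
  let rk (x : Matrix n n D) := finrank F (range (L x))
  obtain ⟨x₀, hx₀, hmax⟩ : ∃ x₀ ∈ U, ∀ y ∈ U, rk y ≤ rk x₀ := by
    have hbdd : BddAbove (rk '' U) :=
      ⟨finrank F (n → D), by rintro _ ⟨y, -, rfl⟩; exact Submodule.finrank_le _⟩
    obtain ⟨x₀, hx₀, h⟩ := Nat.sSup_mem ⟨_, Set.mem_image_of_mem rk U.zero_mem⟩ hbdd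
    exact ⟨x₀, hx₀, fun y hy => h ▸ le_csSup hbdd (Set.mem_image_of_mem rk hy)⟩
  obtain ⟨v₀, hv₀, hv₀x₀⟩ : ∃ v₀ : n → D, v₀ ≠ 0 ∧ v₀ ᵥ* x₀ = 0 := by
    by_contra! h
    exact hU x₀ hx₀ (isUnit_of_forall_vecMul_eq_zero fun v hv => by_contra fun h' => h v h' hv)
  let η := (range (L x₀)).mkQ ∘ₗ vecMulBilin F F v₀
  have hUη : U ≤ ker η := by
    intro y hy
    simp only [η, mem_ker, coe_comp, Function.comp_apply, Submodule.mkQ_apply,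
      Submodule.Quotient.mk_eq_zero]
    refine apply_mem_range_of_finrank_range_add_smul_le (L x₀) (L y) (fun t => ?_) hv₀x₀
    rw [← map_smul, ← map_add]
    exact hmax _ (U.add_mem hx₀ (U.smul_mem t hy))
  have hη : range η = ⊤ := range_eq_top.mpr <| by
    rw [coe_comp]
    exact (Submodule.mkQ_surjective _).comp (exists_vecMul_eq hv₀)
  have := finrank_range_add_finrank_ker η
  have := Submodule.finrank_quotient_add_finrank (range (L x₀))
  have := finrank_range_add_finrank_ker (L x₀)
  have := Submodule.finrank_mono hUη
  have : finrank F D ≤ finrank F (ker (L x₀)) := finrank_le_finrank_ker_vecMul hv₀ hv₀x₀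
  rw [hη, finrank_top] at *
  omega

end Matrix

theorem infinite_of_center_ne_top {F D : Type*} [Field F] [DivisionRing D] [Algebra F D]
    [FiniteDimensional F D] (h : Subalgebra.center F D ≠ ⊤) : Infinite F := by
  by_contra hF
  rw [not_infinite_iff_finite] at hF
  have : Finite D := Module.finite_of_finite F
  let := littleWedderburn D
  exact h (eq_top_iff.mpr fun x _ => Subalgebra.mem_center_iff.mpr fun y => mul_comm y x)

section Centralizer

variable {F D : Type*} [Field F] [Ring D] [Algebra F D] [FiniteDimensional F D]

theorem one_lt_finrank_centralizer_singleton [Nontrivial D] {q : D}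
    (hq : q ∉ (⊥ : Subalgebra F D)) : 1 < finrank F (Subalgebra.centralizer F {q}) := by
  have hlt : Subalgebra.toSubmodule ⊥ < Subalgebra.toSubmodule (Subalgebra.centralizer F {q}) :=
    SetLike.lt_iff_le_and_exists.mpr ⟨fun x hx => bot_le (a := Subalgebra.centralizer F {q}) hx,
      q, by simp [Subalgebra.mem_centralizer_iff], hq⟩
  simpa [Subalgebra.finrank_toSubmodule] using Submodule.finrank_lt_finrank_of_lt hlt

theorem finrank_centralizer_singleton_lt {q : D} (hq : q ∉ Subalgebra.center F D) :
    finrank F (Subalgebra.centralizer F {q}) < finrank F D := by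
  rw [← Subalgebra.finrank_toSubmodule]
  refine Submodule.finrank_lt fun h => hq ?_
  rw [Algebra.toSubmodule_eq_top, Subalgebra.centralizer_eq_top_iff_subset] at h
  exact h rfl

end Centralizer

theorem exists_mem_ker_mem_ker_eq_mul {F A : Type*} [Field F] [Ring A] [Algebra F A]
    [FiniteDimensional F A] (τ : A →ₗ[F] F) (K : Submodule F A) (hK : 2 ≤ finrank F K)
    (hKinv : ∀ k ∈ K, k ≠ 0 → ∃ k' ∈ K, k' * k = 1)
    (hunit : ∀ U : Submodule F A, finrank F A ≤ finrank F U + finrank F K → ∃ u ∈ U, IsUnit u)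
    (a : A) : ∃ h₁ h₂ : A, h₁ ∈ ker τ ∧ h₂ ∈ ker τ ∧ a = h₁ * h₂ := by
  let Θ : A →ₗ[F] K →ₗ[F] F :=
    ((LinearMap.mul F A ∘ₗ mulLeft F a ∘ₗ K.subtype).compr₂ τ).flip
  have hΘ (u : A) (k : K) : Θ u k = τ (a * k * u) := rfl
  obtain ⟨_, hu, ⟨u, rfl⟩⟩ := hunit (ker Θ) <| by
    have := finrank_range_add_finrank_ker Θ
    have := Submodule.finrank_le (range Θ)
    rw [finrank_linearMap_self] at this
    omega
  obtain ⟨j, hj, hj0⟩ : ∃ j ∈ ker (τ ∘ₗ mulLeft F ↑u⁻¹ ∘ₗ K.subtype), j ≠ 0 := by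
    refine Submodule.exists_mem_ne_zero_of_ne_bot (ker_ne_bot_of_finrank_lt ?_)
    rw [finrank_self]
    omega
  obtain ⟨k, hk, hkj⟩ := hKinv j j.2 (by simpa using hj0)
  refine ⟨a * k * u, ↑u⁻¹ * j, ?_, hj, ?_⟩
  · exact (hΘ u ⟨k, hk⟩).symm.trans (LinearMap.congr_fun hu ⟨k, hk⟩)
  · simp [mul_assoc, hkj]

theorem stmt_2_general (F : Type*) [Field F] (D : Type*) [DivisionRing D] [Algebra F D]
    [FiniteDimensional F D]
    (hcenter : Subalgebra.center F D = ⊥)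
    (hD : (⊥ : Subalgebra F D) ≠ ⊤)
    (m : ℕ)
    (τ : Matrix (Fin m) (Fin m) D →ₗ[F] F)
    (a : Matrix (Fin m) (Fin m) D) :
    ∃ h₁ h₂ : Matrix (Fin m) (Fin m) D,
      h₁ ∈ LinearMap.ker τ ∧ h₂ ∈ LinearMap.ker τ ∧ a = h₁ * h₂ := by
  rcases m.eq_zero_or_pos with rfl | hm
  · exact ⟨0, 0, zero_mem _, zero_mem _, Subsingleton.elim _ _⟩
  have : Nonempty (Fin m) := ⟨⟨0, hm⟩⟩
  have : Infinite F := infinite_of_center_ne_top (hcenter ▸ hD)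
  obtain ⟨q, -, hq⟩ := SetLike.exists_of_lt (lt_top_iff_ne_top.mpr hD)
  let K := Subalgebra.centralizer F {q}
  let ι := (Matrix.scalarAlgHom (Fin m) F (α := D)).toLinearMap
  have hKι : finrank F (K.toSubmodule.map ι) = finrank F K :=
    (Submodule.equivMapOfInjective ι (fun _ _ h => Matrix.scalar_inj.mp h) _).finrank_eq.symm
  have hKD : finrank F K < finrank F D := finrank_centralizer_singleton_lt (hcenter ▸ hq)
  refine exists_mem_ker_mem_ker_eq_mul τ (K.toSubmodule.map ι) ?_ ?_ (fun U hU => ?_) a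
  · exact hKι ▸ one_lt_finrank_centralizer_singleton hq
  · rintro _ ⟨k, hk, rfl⟩ hk0
    have hk0 : k ≠ 0 := by rintro rfl; exact hk0 (map_zero ι)
    refine ⟨ι k⁻¹, ⟨k⁻¹, Set.inv_mem_centralizer₀ hk, rfl⟩, ?_⟩
    simp only [ι, AlgHom.toLinearMap_apply, ← map_mul, inv_mul_cancel₀ hk0, map_one]
  · by_contra! h
    have := Matrix.finrank_add_finrank_le_of_forall_not_isUnit U h
    omega

/-- Let `D` be a finite-dimensional central division `F`-algebra with
`D ≠ F` (degree `> 1`), let `A = Mₘ(D)`, and let `H` be the kernel of a nonzero `F`-linear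
functional `τ` on `A` (a hyperplane).  Then every `a ∈ A` is a product of two elements
of `H`. -/
theorem stmt_2 (F : Type*) [Field F] (D : Type*) [DivisionRing D] [Algebra F D]
    [FiniteDimensional F D]
    (hcenter : Subalgebra.center F D = ⊥)
    (hD : (⊥ : Subalgebra F D) ≠ ⊤)
    (m : ℕ)
    (τ : Matrix (Fin m) (Fin m) D →ₗ[F] F) (hτ : τ ≠ 0)
    (a : Matrix (Fin m) (Fin m) D) :
    ∃ h₁ h₂ : Matrix (Fin m) (Fin m) D,
      h₁ ∈ LinearMap.ker τ ∧ h₂ ∈ LinearMap.ker τ ∧ a = h₁ * h₂ :=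
  stmt_2_general F D hcenter hD m τ a
end

section
/- Let F be a field, let D be a finite-dimensional division F-algebra with center F and D ≠ F, let m ∈ ℕ, and let A = M_m(D). Let τ : A → F be a nonzero F-linear functional. For a matrix t ∈ M_m(F) and d ∈ D, write t ⊗ d for the matrix in M_m(D) whose (i,j)-entry is t_{ij}·d. Then for every nonzero a ∈ A and every invertible matrix t ∈ M_m(F), there exists a nonzero d ∈ D such that both h₁ = a·(t⁻¹ ⊗ d⁻¹) and h₂ = t ⊗ d lie in ker τ; in particular a = h₁h₂ with h₁, h₂ ∈ ker τ. -/
/-!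
Write `t ⊗ d` for the matrix with entries `tᵢⱼ • d`; then `(t⁻¹ ⊗ d⁻¹)(t ⊗ d) = 1`, so `a = h₁ h₂`
is automatic and everything reduces to a statement about two linear functionals on `D`:
`f d = τ (t ⊗ d)` and `g e = τ (a (t⁻¹ ⊗ e))`. We need `d ≠ 0` with `f d = 0` and `g d⁻¹ = 0`.

Since `D` is not commutative, it contains a subalgebra `L = F[s]` with `1 < dim L < dim D`.
Counting dimensions, some `c ≠ 0` satisfies `f (c L) = 0`, and some `y ∈ L \ {0}` satisfies
`g (y c⁻¹) = 0`. As `L` is a finite-dimensional subalgebra of a division ring, `y⁻¹ ∈ L`, so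
`d = c y⁻¹` works.
-/

open Module

namespace Matrix

variable {F D m n p : Type*} [CommSemiring F] [Semiring D] [Algebra F D]

def smulEntries (t : Matrix m n F) : D →ₗ[F] Matrix m n D where
  toFun d := of fun i j => t i j • d
  map_add' d e := by ext i j; simp only [of_apply, smul_add, add_apply]
  map_smul' r d := by ext i j; exact smul_comm _ _ _

@[simp]
theorem smulEntries_apply (t : Matrix m n F) (d : D) (i : m) (j : n) :
    smulEntries t d i j = t i j • d :=
  rfl

theorem smulEntries_mul_smulEntries [Fintype n] (s : Matrix m n F) (t : Matrix n p F) (x y : D) :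
    smulEntries s x * smulEntries t y = smulEntries (s * t) (x * y) := by
  ext i k
  simp only [mul_apply, smulEntries_apply, smul_mul_smul_comm, Finset.sum_smul]

theorem smulEntries_one_one [Fintype m] [DecidableEq m] :
    smulEntries (1 : Matrix m m F) (1 : D) = 1 := by
  ext i j
  by_cases h : i = j <;> simp [one_apply, h]

end Matrix

section DivisionAlgebra

variable {F D : Type*} [Field F] [DivisionRing D] [Algebra F D] [FiniteDimensional F D]

theorem exists_subalgebra_one_lt_finrank_lt_finrank (h : Subalgebra.center F D ≠ ⊤) :
    ∃ L : Subalgebra F D, 1 < finrank F L ∧ finrank F L < finrank F D := by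
  obtain ⟨s, -, hs⟩ := SetLike.exists_of_lt (lt_top_iff_ne_top.mpr h)
  refine ⟨Algebra.adjoin F {s}, ?_, ?_⟩
  · have hbot : Algebra.adjoin F {s} ≠ ⊥ := fun hbot =>
      hs (bot_le (a := Subalgebra.center F D) (hbot ▸ Algebra.self_mem_adjoin_singleton F s))
    have := finrank_pos (R := F) (M := Algebra.adjoin F {s})
    have := mt Subalgebra.finrank_eq_one_iff.mp hbot
    omega
  · -- `F[s]` is commutative, so if it were all of `D` then `s` would be central.
    have htop : Subalgebra.toSubmodule (Algebra.adjoin F {s}) ≠ ⊤ := fun htop =>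
      hs (Subalgebra.mem_center_iff.mpr fun x =>
        (Algebra.commute_of_mem_adjoin_self (Algebra.toSubmodule_eq_top.mp htop ▸
          Algebra.mem_top : x ∈ Algebra.adjoin F {s})).symm.eq)
    simpa only [Subalgebra.finrank_toSubmodule] using Submodule.finrank_lt htop

theorem exists_ne_zero_map_eq_zero_map_inv_eq_zero_of_subalgebra (L : Subalgebra F D)
    (hL₁ : 1 < finrank F L) (hL₂ : finrank F L < finrank F D) (f g : D →ₗ[F] F) :
    ∃ d : D, d ≠ 0 ∧ f d = 0 ∧ g d⁻¹ = 0 := by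
  let Φ : D →ₗ[F] Dual F L := ((LinearMap.mul F D).compl₂ L.val.toLinearMap).compr₂ f
  obtain ⟨c, hcΦ, hc⟩ := Submodule.ne_bot_iff _ |>.mp <|
    LinearMap.ker_ne_bot_of_finrank_lt (f := Φ) (by rwa [Subspace.dual_finrank_eq])
  let ψ : Dual F L := g ∘ₗ LinearMap.mulRight F c⁻¹ ∘ₗ L.val.toLinearMap
  obtain ⟨y, hyψ, hy⟩ := Submodule.ne_bot_iff _ |>.mp <|
    LinearMap.ker_ne_bot_of_finrank_lt (f := ψ) (by rwa [finrank_self])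
  have hy₀ : (y : D) ≠ 0 := by exact_mod_cast hy
  have hyinv : (y : D)⁻¹ ∈ L := (Algebra.IsIntegral.isIntegral (R := F) (y : D)).inv_mem y.2
  refine ⟨c * (y : D)⁻¹, mul_ne_zero hc (inv_ne_zero hy₀), ?_, ?_⟩
  · exact LinearMap.congr_fun (LinearMap.mem_ker.mp hcΦ) ⟨_, hyinv⟩
  · rw [mul_inv_rev, inv_inv]
    exact LinearMap.mem_ker.mp hyψ

end DivisionAlgebra

theorem stmt_3_general (F : Type*) [Field F] (D : Type*) [DivisionRing D] [Algebra F D]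
    [FiniteDimensional F D]
    (hcenter : Subalgebra.center F D = ⊥)
    (hD : (⊥ : Subalgebra F D) ≠ ⊤)
    (m : ℕ)
    (τ : Matrix (Fin m) (Fin m) D →ₗ[F] F)
    (a : Matrix (Fin m) (Fin m) D)
    (t : Matrix (Fin m) (Fin m) F) (ht : IsUnit t) :
    ∃ d : D, d ≠ 0 ∧
      a * (Matrix.of fun i j => t⁻¹ i j • d⁻¹) ∈ LinearMap.ker τ ∧
      (Matrix.of fun i j => t i j • d) ∈ LinearMap.ker τ ∧
      a = (a * (Matrix.of fun i j => t⁻¹ i j • d⁻¹)) * (Matrix.of fun i j => t i j • d) := by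
  have hnoncomm : Subalgebra.center F D ≠ ⊤ := hcenter ▸ hD
  obtain ⟨L, hL₁, hL₂⟩ := exists_subalgebra_one_lt_finrank_lt_finrank hnoncomm
  obtain ⟨d, hd, hτd, hτad⟩ := exists_ne_zero_map_eq_zero_map_inv_eq_zero_of_subalgebra L hL₁ hL₂
    (τ ∘ₗ Matrix.smulEntries t) (τ ∘ₗ LinearMap.mulLeft F a ∘ₗ Matrix.smulEntries t⁻¹)
  have hinv : Matrix.smulEntries t⁻¹ d⁻¹ * Matrix.smulEntries t d = 1 := by
    rw [Matrix.smulEntries_mul_smulEntries,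
      Matrix.nonsing_inv_mul t (t.isUnit_iff_isUnit_det.mp ht), inv_mul_cancel₀ hd,
      Matrix.smulEntries_one_one]
  refine ⟨d, hd, hτad, hτd, ?_⟩
  rw [mul_assoc]
  exact ((congrArg (a * ·) hinv).trans (mul_one a)).symm

/-- With `D` a finite-dimensional central division `F`-algebra, `D ≠ F`,
`A = Mₘ(D)`, and `τ` a nonzero `F`-linear functional on `A`: for every nonzero `a ∈ A` and
every invertible `t ∈ Mₘ(F)`, there is a nonzero `d ∈ D` such that `h₁ = a·(t⁻¹ ⊗ d⁻¹)` and
`h₂ = t ⊗ d` both lie in `ker τ`, and `a = h₁ h₂`.  Here `t ⊗ d` is the matrix with entries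
`tᵢⱼ • d`. -/
theorem stmt_3 (F : Type*) [Field F] (D : Type*) [DivisionRing D] [Algebra F D]
    [FiniteDimensional F D]
    (hcenter : Subalgebra.center F D = ⊥)
    (hD : (⊥ : Subalgebra F D) ≠ ⊤)
    (m : ℕ)
    (τ : Matrix (Fin m) (Fin m) D →ₗ[F] F) (hτ : τ ≠ 0)
    (a : Matrix (Fin m) (Fin m) D) (ha : a ≠ 0)
    (t : Matrix (Fin m) (Fin m) F) (ht : IsUnit t) :
    ∃ d : D, d ≠ 0 ∧
      a * (Matrix.of fun i j => t⁻¹ i j • d⁻¹) ∈ LinearMap.ker τ ∧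
      (Matrix.of fun i j => t i j • d) ∈ LinearMap.ker τ ∧
      a = (a * (Matrix.of fun i j => t⁻¹ i j • d⁻¹)) * (Matrix.of fun i j => t i j • d) :=
  stmt_3_general F D hcenter hD m τ a t ht
end

section
/- Let X be a compact Hausdorff topological space and let p be a projection in M_n(C(X)), the n×n matrices over the C*-algebra C(X) of continuous complex-valued functions on X. Then the following are equivalent: (i) e₁₁ ≾ p, i.e., there exists v ∈ M_n(C(X)) with v*v = e₁₁ and vv* ≤ p; (ii) there exists a continuous map s : X → ℂⁿ such that p(x)s(x) = s(x) and s(x) ≠ 0 for all x ∈ X (a nowhere-zero continuous section of the vector bundle ξ_p associated to p). -/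
/-!
Everything happens fibrewise. If `v* v = e₁₁`, the first column `s = v e₁` of `v` is a unit
vector with `v v* s = s`, so `v v* ≤ p` gives `⟪s, p s⟫ ≥ ‖s‖²`; since `p` is a projection,
`‖s - p s‖² = ‖s‖² - ⟪s, p s⟫`, which forces `p s = s`. Conversely, normalise the section to a
unit vector field `u` and let `v = u e₁*`: then `v* v = e₁₁` and `v v* = u u*`, which lies under
`p` because `p u = u` makes `p - u u*` a projection.
-/

open Matrix ComplexOrder

namespace Matrix

section StarProjection

variable {𝕜 m : Type*} [RCLike 𝕜] [Fintype m]

lemma IsStarProjection.star_sub_mulVec_dotProduct {p : Matrix m m 𝕜} (hp : IsStarProjection p)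
    (s : m → 𝕜) :
    star (s - p *ᵥ s) ⬝ᵥ (s - p *ᵥ s) = star s ⬝ᵥ s - star s ⬝ᵥ (p *ᵥ s) := by
  have hstar : star (p *ᵥ s) = star s ᵥ* p := by
    rw [star_mulVec, show pᴴ = p from hp.isSelfAdjoint]
  have hidem : p * p = p := hp.isIdempotentElem
  rw [star_sub, hstar, sub_dotProduct, dotProduct_sub, dotProduct_sub, ← dotProduct_mulVec,
    ← dotProduct_mulVec, mulVec_mulVec, hidem]
  ring

lemma IsStarProjection.mulVec_eq_self_of_le {p : Matrix m m 𝕜} (hp : IsStarProjection p)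
    {s : m → 𝕜} (h : star s ⬝ᵥ s ≤ star s ⬝ᵥ (p *ᵥ s)) : p *ᵥ s = s := by
  have hle : star (s - p *ᵥ s) ⬝ᵥ (s - p *ᵥ s) ≤ 0 := by
    rw [hp.star_sub_mulVec_dotProduct]
    exact sub_nonpos.mpr h
  have hzero := le_antisymm hle (dotProduct_star_self_nonneg _)
  exact (sub_eq_zero.mp (dotProduct_star_self_eq_zero.mp hzero)).symm

lemma IsStarProjection.mulVec_col_eq_self_and_ne_zero [DecidableEq m] {p v : Matrix m m 𝕜}
    (hp : IsStarProjection p) {i : m} (hv : vᴴ * v = single i i 1)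
    (hle : (p - v * vᴴ).PosSemidef) :
    p *ᵥ (v *ᵥ Pi.single i 1) = v *ᵥ Pi.single i 1 ∧ v *ᵥ Pi.single i 1 ≠ 0 := by
  set c := v *ᵥ Pi.single i 1
  have hvc : vᴴ *ᵥ c = Pi.single i 1 := by
    rw [mulVec_mulVec, hv, mulVec_single_one]
    ext j
    simp [col, single_apply, Pi.single_apply, eq_comm]
  have hvvc : (v * vᴴ) *ᵥ c = c := by rw [← mulVec_mulVec, hvc]
  constructor
  · refine hp.mulVec_eq_self_of_le ?_
    have hnonneg := hle.dotProduct_mulVec_nonneg c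
    rwa [sub_mulVec, dotProduct_sub, hvvc, sub_nonneg] at hnonneg
  · intro hc
    rw [hc, mulVec_zero] at hvc
    simpa using congrFun hvc i

lemma isStarProjection_vecMulVec_star_self {u : m → 𝕜} (hu : star u ⬝ᵥ u = 1) :
    IsStarProjection (vecMulVec u (star u)) where
  isIdempotentElem := by
    rw [IsIdempotentElem, vecMulVec_mul_vecMulVec, hu, one_smul]
  isSelfAdjoint := by
    rw [IsSelfAdjoint, star_eq_conjTranspose, conjTranspose_vecMulVec, star_star]

open scoped MatrixOrder in
lemma IsStarProjection.posSemidef_sub_vecMulVec {p : Matrix m m 𝕜} (hp : IsStarProjection p)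
    {u : m → 𝕜} (hpu : p *ᵥ u = u) (hu : star u ⬝ᵥ u = 1) :
    (p - vecMulVec u (star u)).PosSemidef := by
  have hqp : p * vecMulVec u (star u) = vecMulVec u (star u) := by
    rw [mul_vecMulVec, hpu]
  exact ((isStarProjection_vecMulVec_star_self hu).sub_of_mul_eq_right hp hqp).nonneg.posSemidef

end StarProjection

section VecMulVecSingle

variable {R m n : Type*} [CommSemiring R] [StarRing R] [DecidableEq n]

lemma conjTranspose_mul_self_vecMulVec_single [Fintype m] (u : m → R) (i : n) :
    (vecMulVec u (Pi.single i 1))ᴴ * vecMulVec u (Pi.single i 1) = single i i (star u ⬝ᵥ u) := by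
  rw [conjTranspose_vecMulVec, Pi.star_single, star_one, vecMulVec_mul_vecMulVec, vecMulVec_smul,
    ← single_eq_single_vecMulVec_single, smul_single, smul_eq_mul, mul_one]

lemma vecMulVec_single_mul_conjTranspose [Fintype n] (u : m → R) (i : n) :
    vecMulVec u (Pi.single i 1) * (vecMulVec u (Pi.single i 1))ᴴ = vecMulVec u (star u) := by
  simp [conjTranspose_vecMulVec, vecMulVec_mul_vecMulVec]

end VecMulVecSingle

lemma exists_continuous_smul_unit {𝕜 m X : Type*} [RCLike 𝕜] [Fintype m] [TopologicalSpace X]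
    {s : X → m → 𝕜} (hs : Continuous s) (h0 : ∀ x, s x ≠ 0) :
    ∃ c : X → 𝕜, Continuous (fun x => c x • s x) ∧ ∀ x, star (c x • s x) ⬝ᵥ (c x • s x) = 1 := by
  set w : X → EuclideanSpace 𝕜 m := fun x => WithLp.toLp 2 (s x)
  have hw0 : ∀ x, w x ≠ 0 := fun x => by simpa [w] using h0 x
  refine ⟨fun x => (‖w x‖ : 𝕜)⁻¹, ?_, fun x => ?_⟩
  · have hw : Continuous w := (PiLp.continuous_toLp 2 (fun _ : m => 𝕜)).comp hs
    exact (((RCLike.continuous_ofReal (K := 𝕜)).comp hw.norm).inv₀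
      fun x => RCLike.ofReal_ne_zero.mpr (norm_ne_zero_iff.mpr (hw0 x))).smul hs
  · rw [dotProduct_comm, ← EuclideanSpace.inner_toLp_toLp, WithLp.toLp_smul,
      inner_self_eq_norm_sq_to_K, norm_smul_inv_norm (hw0 x)]
    simp

end Matrix

theorem stmt_4_general (X : Type*) [TopologicalSpace X]
    (n : ℕ) (hn : 0 < n)
    (p : X → Matrix (Fin n) (Fin n) ℂ)
    (hproj : ∀ x, p x * p x = p x ∧ (p x)ᴴ = p x) :
    (∃ v : X → Matrix (Fin n) (Fin n) ℂ, Continuous v ∧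
        (∀ x, (v x)ᴴ * v x = Matrix.single ⟨0, hn⟩ ⟨0, hn⟩ 1) ∧
        (∀ x, (p x - v x * (v x)ᴴ).PosSemidef)) ↔
    (∃ s : X → Fin n → ℂ, Continuous s ∧ ∀ x, p x *ᵥ s x = s x ∧ s x ≠ 0) := by
  have hP : ∀ x, IsStarProjection (p x) := fun x => ⟨(hproj x).1, (hproj x).2⟩
  constructor
  · rintro ⟨v, hv, hvv, hle⟩
    exact ⟨fun x => v x *ᵥ Pi.single ⟨0, hn⟩ 1, hv.matrix_mulVec continuous_const,
      fun x => (hP x).mulVec_col_eq_self_and_ne_zero (hvv x) (hle x)⟩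
  · rintro ⟨s, hs, hps⟩
    obtain ⟨c, hc, hunit⟩ := exists_continuous_smul_unit hs fun x => (hps x).2
    refine ⟨fun x => vecMulVec (c x • s x) (Pi.single ⟨0, hn⟩ 1),
      hc.matrix_vecMulVec continuous_const, fun x => ?_, fun x => ?_⟩
    · rw [conjTranspose_mul_self_vecMulVec_single, hunit]
    · rw [vecMulVec_single_mul_conjTranspose]
      exact (hP x).posSemidef_sub_vecMulVec (by rw [mulVec_smul, (hps x).1]) (hunit x)

/-- For a compact Hausdorff space `X` and a projection
`p ∈ Mₙ(C(X))` (represented as a continuous matrix-valued function), the constant matrix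
unit `e₁₁` is Murray–von Neumann subequivalent to `p` (i.e. there is `v` with `v*v = e₁₁`
and `vv* ≤ p`, positivity being pointwise positive semidefiniteness) if and only if the
vector bundle `ξ_p` admits a nowhere-zero continuous section. -/
theorem stmt_4 (X : Type*) [TopologicalSpace X] [CompactSpace X] [T2Space X]
    (n : ℕ) (hn : 0 < n)
    (p : X → Matrix (Fin n) (Fin n) ℂ) (hp : Continuous p)
    (hproj : ∀ x, p x * p x = p x ∧ (p x)ᴴ = p x) :
    (∃ v : X → Matrix (Fin n) (Fin n) ℂ, Continuous v ∧
        (∀ x, (v x)ᴴ * v x = Matrix.single ⟨0, hn⟩ ⟨0, hn⟩ 1) ∧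
        (∀ x, (p x - v x * (v x)ᴴ).PosSemidef)) ↔
    (∃ s : X → Fin n → ℂ, Continuous s ∧ ∀ x, p x *ᵥ s x = s x ∧ s x ≠ 0) :=
  stmt_4_general X n hn p hproj
end

section
/- Let X be a compact Hausdorff topological space, let p be a projection in M_N(C(X)), and let n ∈ ℕ. Let p^{⊕n} ∈ M_{nN}(C(X)) denote the block-diagonal projection with n diagonal blocks equal to p. Then e₁₁ ≾ p^{⊕n} (i.e., there exists v ∈ M_{nN}(C(X)) with v*v = e₁₁ and vv* ≤ p^{⊕n}) if and only if there exist continuous maps s₁, …, sₙ : X → ℂᴺ with p(x)s_j(x) = s_j(x) for all x and all j, such that for every x ∈ X at least one s_j(x) ≠ 0. Consequently, if e₁₁ ⋠ p^{⊕n}, then any n continuous sections of ξ_p vanish simultaneously at some point of X. -/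
/-!
Write `P = p^{⊕n}` and `k₀` for the index of `e₁₁`. If `v*v = e₁₁`, then `v` is determined by its
column `w = v e_{k₀}`, a unit vector with `vv* = ww*`; and for a rank-one projection `ww*` one has
`ww* ≤ P` iff `Pw = w`. So `e₁₁ ≾ P` amounts to a continuous unit section of `P`, which is the same
as a nowhere-vanishing one after normalising pointwise. A section of `p^{⊕n}` is an `n`-tuple of
sections of `p`, and it vanishes at `x` iff all of them do.
-/

open Matrix ComplexOrder

open scoped MatrixOrder

theorem Matrix.blockDiagonal_mulVec_apply {ι κ R : Type*} [Fintype ι] [Fintype κ]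
    [DecidableEq κ] [NonUnitalNonAssocSemiring R] (d : κ → Matrix ι ι R) (w : ι × κ → R)
    (i : ι) (j : κ) :
    (blockDiagonal d *ᵥ w) (i, j) = (d j *ᵥ fun i' => w (i', j)) i := by
  simp [mulVec, dotProduct, Fintype.sum_prod_type, blockDiagonal_apply, ite_mul, Finset.sum_ite_eq]

theorem IsStarProjection.blockDiagonal {ι κ R : Type*} [Fintype ι] [Fintype κ] [DecidableEq κ]
    [Semiring R] [StarRing R] {d : κ → Matrix ι ι R} (hd : ∀ j, IsStarProjection (d j)) :
    IsStarProjection (blockDiagonal d) where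
  isIdempotentElem := by
    rw [IsIdempotentElem, ← blockDiagonal_mul]
    exact congrArg _ (funext fun j => (hd j).isIdempotentElem)
  isSelfAdjoint := by
    rw [IsSelfAdjoint, star_eq_conjTranspose, blockDiagonal_conjTranspose]
    exact congrArg _ (funext fun j => (hd j).isSelfAdjoint)

theorem exists_continuous_normalizing_scalar {X m : Type*} [TopologicalSpace X] [Fintype m]
    {w : X → m → ℂ} (hw : Continuous w) (h0 : ∀ x, w x ≠ 0) :
    ∃ c : X → ℂ, Continuous c ∧ ∀ x, star (c x • w x) ⬝ᵥ (c x • w x) = 1 := by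
  set g : X → ℝ := fun x => (star (w x) ⬝ᵥ w x).re
  have hg_pos x : 0 < g x := (Complex.pos_iff.mp (dotProduct_star_self_pos_iff.mpr (h0 x))).1
  have hg x : star (w x) ⬝ᵥ w x = g x :=
    Complex.ext rfl (Complex.nonneg_iff.mp (dotProduct_star_self_nonneg (w x))).2.symm
  refine ⟨fun x => ((√(g x))⁻¹ : ℝ), ?_, fun x => ?_⟩
  · have : Continuous g := by fun_prop
    fun_prop (disch := exact fun x => (Real.sqrt_pos.mpr (hg_pos x)).ne')
  · rw [star_smul, smul_dotProduct, dotProduct_smul, hg]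
    simp only [Complex.star_def, Complex.conj_ofReal, smul_eq_mul]
    rw [← mul_assoc, ← Complex.ofReal_mul, ← Complex.ofReal_mul, ← mul_inv,
      Real.mul_self_sqrt (hg_pos x).le, inv_mul_cancel₀ (hg_pos x).ne', Complex.ofReal_one]

namespace Matrix

section Projection

variable {m : Type*} [Fintype m]

theorem isStarProjection_vecMulVec_star {w : m → ℂ} (hw : star w ⬝ᵥ w = 1) :
    IsStarProjection (vecMulVec w (star w)) where
  isIdempotentElem := by
    rw [IsIdempotentElem, vecMulVec_mul_vecMulVec, hw, one_smul]
  isSelfAdjoint := by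
    rw [IsSelfAdjoint, star_eq_conjTranspose, conjTranspose_vecMulVec, star_star]

variable [DecidableEq m]

theorem dotProduct_star_mulVec_single_self {v : Matrix m m ℂ} {k : m}
    (hv : vᴴ * v = single k k 1) :
    star (v *ᵥ Pi.single k 1) ⬝ᵥ (v *ᵥ Pi.single k 1) = 1 := by
  rw [star_mulVec, ← dotProduct_mulVec, mulVec_mulVec, hv]
  simp

/- With the L2 operator norm, matrices form a C⋆-algebra, in which `0 ≤ a ≤ P` for a projection `P`
forces `P a = a`. -/
open scoped Matrix.Norms.L2Operator in
theorem mulVec_mulVec_single_of_le {P v : Matrix m m ℂ} {k : m} (hP : IsStarProjection P)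
    (hv : vᴴ * v = single k k 1) (hle : (P - v * vᴴ).PosSemidef) :
    P *ᵥ (v *ᵥ Pi.single k 1) = v *ᵥ Pi.single k 1 := by
  have hPQ : P * (v * vᴴ) = v * vᴴ :=
    (hP.mul_right_and_mul_left_of_nonneg_of_le
      (posSemidef_self_mul_conjTranspose v).nonneg (le_iff.mpr hle)).2
  have hQ : (v * vᴴ) *ᵥ (v *ᵥ Pi.single k 1) = v *ᵥ Pi.single k 1 := by
    rw [mulVec_mulVec, Matrix.mul_assoc, hv, ← mulVec_mulVec, single_mulVec_eq]
    simp
  rw [← hQ, mulVec_mulVec, hPQ]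

theorem conjTranspose_vecMulVec_single_mul_self {w : m → ℂ} (hw : star w ⬝ᵥ w = 1) (k : m) :
    (vecMulVec w (Pi.single k 1))ᴴ * vecMulVec w (Pi.single k 1) = single k k 1 := by
  rw [conjTranspose_vecMulVec, vecMulVec_mul_vecMulVec, hw, one_smul,
    single_eq_single_vecMulVec_single]
  simp

theorem posSemidef_sub_vecMulVec_single {P : Matrix m m ℂ} {w : m → ℂ}
    (hP : IsStarProjection P) (hPw : P *ᵥ w = w) (hw : star w ⬝ᵥ w = 1) (k : m) :
    (P - vecMulVec w (Pi.single k 1) * (vecMulVec w (Pi.single k 1))ᴴ).PosSemidef := by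
  have hQ : vecMulVec w (Pi.single k 1) * (vecMulVec w (Pi.single k 1))ᴴ =
      vecMulVec w (star w) := by
    rw [conjTranspose_vecMulVec, vecMulVec_mul_vecMulVec]
    simp
  rw [hQ, ← le_iff]
  exact (isStarProjection_vecMulVec_star hw).le_of_mul_eq_right hP
    (by rw [mul_vecMulVec, hPw])

theorem exists_continuous_partialIsometry_iff {X : Type*} [TopologicalSpace X]
    {P : X → Matrix m m ℂ} (hP : ∀ x, IsStarProjection (P x)) (k : m) :
    (∃ v : X → Matrix m m ℂ, Continuous v ∧ (∀ x, (v x)ᴴ * v x = single k k 1) ∧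
        ∀ x, (P x - v x * (v x)ᴴ).PosSemidef) ↔
      ∃ w : X → m → ℂ, Continuous w ∧ (∀ x, P x *ᵥ w x = w x) ∧ ∀ x, w x ≠ 0 := by
  constructor
  · rintro ⟨v, hv, hvv, hle⟩
    refine ⟨fun x => v x *ᵥ Pi.single k 1, by fun_prop,
      fun x => mulVec_mulVec_single_of_le (hP x) (hvv x) (hle x), fun x h => ?_⟩
    simpa [h] using dotProduct_star_mulVec_single_self (hvv x)
  · rintro ⟨w, hw, hPw, hw0⟩
    obtain ⟨c, hc, hcw⟩ := exists_continuous_normalizing_scalar hw hw0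
    refine ⟨fun x => vecMulVec (c x • w x) (Pi.single k 1), by fun_prop,
      fun x => conjTranspose_vecMulVec_single_mul_self (hcw x) k,
      fun x => posSemidef_sub_vecMulVec_single (hP x) ?_ (hcw x) k⟩
    rw [mulVec_smul, hPw]

end Projection

end Matrix

theorem exists_fixed_blockDiagonal_iff_exists_fixed_family {X ι κ : Type*} [TopologicalSpace X]
    [Fintype ι] [Fintype κ] [DecidableEq κ] (p : X → Matrix ι ι ℂ) :
    (∃ w : X → ι × κ → ℂ, Continuous w ∧ (∀ x, blockDiagonal (fun _ => p x) *ᵥ w x = w x) ∧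
        ∀ x, w x ≠ 0) ↔
      ∃ s : κ → X → ι → ℂ, (∀ j, Continuous (s j)) ∧ (∀ j x, p x *ᵥ s j x = s j x) ∧
        ∀ x, ∃ j, s j x ≠ 0 := by
  constructor
  · rintro ⟨w, hw, hpw, hw0⟩
    refine ⟨fun j x i => w x (i, j), fun j => by fun_prop, fun j x => ?_, fun x => ?_⟩
    · ext i
      simpa only [blockDiagonal_mulVec_apply] using congrFun (hpw x) (i, j)
    · by_contra! h
      exact hw0 x (funext fun a => congrFun (h a.2) a.1)
  · rintro ⟨s, hs, hps, hs0⟩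
    refine ⟨fun x a => s a.2 x a.1, by fun_prop, fun x => ?_, fun x => ?_⟩
    · ext ⟨i, j⟩
      rw [blockDiagonal_mulVec_apply, hps]
    · obtain ⟨j, hj⟩ := hs0 x
      obtain ⟨i, hi⟩ := Function.ne_iff.mp hj
      exact Function.ne_iff.mpr ⟨(i, j), hi⟩

theorem stmt_5_general (X : Type*) [TopologicalSpace X]
    (N : ℕ) (hN : 0 < N) (n : ℕ) (hn : 0 < n)
    (p : X → Matrix (Fin N) (Fin N) ℂ)
    (hproj : ∀ x, p x * p x = p x ∧ (p x)ᴴ = p x) :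
    ((∃ v : X → Matrix (Fin N × Fin n) (Fin N × Fin n) ℂ, Continuous v ∧
        (∀ x, (v x)ᴴ * v x =
          Matrix.single (⟨0, hN⟩, ⟨0, hn⟩) (⟨0, hN⟩, ⟨0, hn⟩) 1) ∧
        (∀ x, (Matrix.blockDiagonal (fun _ : Fin n => p x) - v x * (v x)ᴴ).PosSemidef)) ↔
      (∃ s : Fin n → X → Fin N → ℂ, (∀ j, Continuous (s j)) ∧
        (∀ j x, p x *ᵥ s j x = s j x) ∧ (∀ x, ∃ j, s j x ≠ 0))) ∧
    ((¬ ∃ v : X → Matrix (Fin N × Fin n) (Fin N × Fin n) ℂ, Continuous v ∧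
        (∀ x, (v x)ᴴ * v x =
          Matrix.single (⟨0, hN⟩, ⟨0, hn⟩) (⟨0, hN⟩, ⟨0, hn⟩) 1) ∧
        (∀ x, (Matrix.blockDiagonal (fun _ : Fin n => p x) - v x * (v x)ᴴ).PosSemidef)) →
      ∀ s : Fin n → X → Fin N → ℂ, (∀ j, Continuous (s j)) →
        (∀ j x, p x *ᵥ s j x = s j x) → ∃ x, ∀ j, s j x = 0) := by
  have hP x : IsStarProjection (blockDiagonal fun _ : Fin n => p x) :=
    .blockDiagonal fun _ => isStarProjection_iff'.mpr (hproj x)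
  have key := (exists_continuous_partialIsometry_iff hP (⟨0, hN⟩, ⟨0, hn⟩)).trans
    (exists_fixed_blockDiagonal_iff_exists_fixed_family p)
  refine ⟨key, fun hv s hs hps => ?_⟩
  by_contra! h0
  exact hv (key.mpr ⟨s, hs, hps, h0⟩)

/-- For a projection `p ∈ M_N(C(X))` over a compact Hausdorff space `X`
and `n ∈ ℕ`, one has `e₁₁ ≾ p^{⊕n}` if and only if there exist `n` continuous sections
`s₁, …, sₙ` of `ξ_p` that do not vanish simultaneously.  Consequently, if
`e₁₁ ⋠ p^{⊕n}`, then any `n` continuous sections of `ξ_p` vanish simultaneously at some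
point of `X`. -/
theorem stmt_5 (X : Type*) [TopologicalSpace X] [CompactSpace X] [T2Space X]
    (N : ℕ) (hN : 0 < N) (n : ℕ) (hn : 0 < n)
    (p : X → Matrix (Fin N) (Fin N) ℂ) (hp : Continuous p)
    (hproj : ∀ x, p x * p x = p x ∧ (p x)ᴴ = p x) :
    ((∃ v : X → Matrix (Fin N × Fin n) (Fin N × Fin n) ℂ, Continuous v ∧
        (∀ x, (v x)ᴴ * v x =
          Matrix.single (⟨0, hN⟩, ⟨0, hn⟩) (⟨0, hN⟩, ⟨0, hn⟩) 1) ∧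
        (∀ x, (Matrix.blockDiagonal (fun _ : Fin n => p x) - v x * (v x)ᴴ).PosSemidef)) ↔
      (∃ s : Fin n → X → Fin N → ℂ, (∀ j, Continuous (s j)) ∧
        (∀ j x, p x *ᵥ s j x = s j x) ∧ (∀ x, ∃ j, s j x ≠ 0))) ∧
    ((¬ ∃ v : X → Matrix (Fin N × Fin n) (Fin N × Fin n) ℂ, Continuous v ∧
        (∀ x, (v x)ᴴ * v x =
          Matrix.single (⟨0, hN⟩, ⟨0, hn⟩) (⟨0, hN⟩, ⟨0, hn⟩) 1) ∧
        (∀ x, (Matrix.blockDiagonal (fun _ : Fin n => p x) - v x * (v x)ᴴ).PosSemidef)) →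
      ∀ s : Fin n → X → Fin N → ℂ, (∀ j, Continuous (s j)) →
        (∀ j x, p x *ᵥ s j x = s j x) → ∃ x, ∀ j, s j x = 0) :=
  stmt_5_general X N hN n hn p hproj
end

section
/- Let S² = {(x,y,z) ∈ ℝ³ : x² + y² + z² = 1} and let p : S² → M₂(ℂ) be the Bott projection, p(x,y,z) = (1/2)·[[1+x, y−iz],[y+iz, 1−x]]. Then the vector bundle ξ_p admits no nowhere-zero continuous section: for every continuous map s : S² → ℂ² satisfying p(v)s(v) = s(v) for all v ∈ S², there exists v ∈ S² with s(v) = 0. Equivalently, e₁₁ ⋠ p in M₂(C(S²)). -/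
open Matrix ComplexOrder

/-- The 2-sphere `S² = {(x,y,z) ∈ ℝ³ : x² + y² + z² = 1}`. -/
abbrev TwoSphere : Type := {v : Fin 3 → ℝ // v 0 ^ 2 + v 1 ^ 2 + v 2 ^ 2 = 1}

/-- The Bott projection `p(x,y,z) = (1/2)·[[1+x, y−iz],[y+iz, 1−x]]`. -/
noncomputable def bottProjection (v : TwoSphere) : Matrix (Fin 2) (Fin 2) ℂ :=
  (2 : ℂ)⁻¹ • !![1 + (v.1 0 : ℂ), (v.1 1 : ℂ) - Complex.I * (v.1 2 : ℂ);
                 (v.1 1 : ℂ) + Complex.I * (v.1 2 : ℂ), 1 - (v.1 0 : ℂ)]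

/-!
A nowhere-zero section `s` has `s₀ ≠ 0` on the closed upper hemisphere `x ≥ 0` and `s₁ ≠ 0` on
the closed lower hemisphere `x ≤ 0`. Both hemispheres are graphs over the closed unit disk, which
is simply connected, so `s₀` and `s₁` have continuous logarithms there. On the equator the section
equation reads `s₀ = conj(y + iz) · s₁`, so `y + iz = s₁ / s₀` would have a continuous logarithm on
the unit circle, which lifting through `exp` rules out.

If `w*w = e₁₁` and `ww* ≤ p`, the first column of `w` is a unit vector fixed by `ww*`, hence by
`p`: a nowhere-zero section.
-/

open Metric

section StarProjection

variable {n 𝕜 : Type*} [Fintype n] [RCLike 𝕜] {P Q : Matrix n n 𝕜}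

theorem IsStarProjection.star_mulVec_dotProduct_mulVec (hP : IsStarProjection P) (x : n → 𝕜) :
    star (P *ᵥ x) ⬝ᵥ (P *ᵥ x) = star x ⬝ᵥ (P *ᵥ x) := by
  rw [star_mulVec, ← dotProduct_mulVec, mulVec_mulVec, ← star_eq_conjTranspose,
    hP.isSelfAdjoint.star_eq, hP.isIdempotentElem.eq]

theorem IsStarProjection.mulVec_eq_self_of_posSemidef_sub [DecidableEq n]
    (hP : IsStarProjection P) (hPQ : (P - Q).PosSemidef) {x : n → 𝕜} (hx : Q *ᵥ x = x) :
    P *ᵥ x = x := by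
  have hle : star ((1 - P) *ᵥ x) ⬝ᵥ ((1 - P) *ᵥ x) ≤ 0 := by
    have := hPQ.dotProduct_mulVec_nonneg x
    rw [sub_mulVec, hx] at this
    rw [hP.one_sub.star_mulVec_dotProduct_mulVec, sub_mulVec, one_mulVec]
    simpa [dotProduct_sub] using this
  have hzero := dotProduct_star_self_eq_zero.mp (le_antisymm hle (dotProduct_star_self_nonneg _))
  rwa [sub_mulVec, one_mulVec, sub_eq_zero, eq_comm] at hzero

end StarProjection

section PartialIsometry

variable {m n 𝕜 : Type*} [Fintype m] [Fintype n] [DecidableEq n] [RCLike 𝕜]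
  {W : Matrix m n 𝕜} {i : n}

theorem mulVec_single_ne_zero_of_conjTranspose_mul_self_eq_single
    (hW : Wᴴ * W = single i i 1) : W *ᵥ Pi.single i 1 ≠ 0 := by
  intro h
  have := congrArg (Wᴴ *ᵥ ·) h
  simp only [mulVec_mulVec, hW, mulVec_zero] at this
  simpa using congrFun this i

theorem mul_conjTranspose_mulVec_mulVec_single_of_conjTranspose_mul_self_eq_single
    (hW : Wᴴ * W = single i i 1) :
    (W * Wᴴ) *ᵥ (W *ᵥ Pi.single i 1) = W *ᵥ Pi.single i 1 := by
  rw [mulVec_mulVec, Matrix.mul_assoc, hW, ← mulVec_mulVec]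
  congr 1
  ext j
  simp [single_apply, Pi.single_apply, eq_comm]

end PartialIsometry

theorem exists_continuous_exp_eq {A : Type*} [TopologicalSpace A] [SimplyConnectedSpace A]
    [LocallyPathConnectedSpace A] {f : A → ℂ} (hf : Continuous f) (hf₀ : ∀ a, f a ≠ 0) :
    ∃ g : A → ℂ, Continuous g ∧ ∀ a, Complex.exp (g a) = f a := by
  obtain ⟨a₀⟩ := (inferInstance : Nonempty A)
  obtain ⟨g, ⟨-, hg⟩, -⟩ := Complex.isCoveringMapOn_exp.existsUnique_continuousMap_lifts
    ⟨f, hf⟩ (Complex.exp_log (hf₀ a₀)) hf₀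
  exact ⟨g, g.continuous, congrFun hg⟩

theorem Convex.exists_continuous_exp_eq {E : Type*} [NormedAddCommGroup E] [NormedSpace ℝ E]
    {S : Set E} (hS : Convex ℝ S) (hne : S.Nonempty) {f : S → ℂ} (hf : Continuous f)
    (hf₀ : ∀ a, f a ≠ 0) : ∃ g : S → ℂ, Continuous g ∧ ∀ a, Complex.exp (g a) = f a := by
  have := hS.contractibleSpace hne
  have := hS.locallyPathConnectedSpace
  exact _root_.exists_continuous_exp_eq hf hf₀

theorem Circle.not_exists_continuous_exp_eq :
    ¬ ∃ g : Circle → ℂ, Continuous g ∧ ∀ z, Complex.exp (g z) = z := by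
  rintro ⟨g, hg, hexp⟩
  -- `h` takes values in `2πiℤ`, so it is constant, yet `h (2π) - h 0 = -2πi`.
  set h : ℝ → ℂ := fun t => g (Circle.exp t) - t * Complex.I
  have hexp_h : ∀ t, Complex.exp (h t) = 1 := fun t => by
    simp [h, Complex.exp_sub, hexp, Circle.coe_exp]
  have hconst := Complex.isCoveringMap_exp.const_of_comp (g := h) (by fun_prop)
    (fun t t' => Subtype.ext <| by simp only [hexp_h]) (2 * Real.pi) 0
  simp [h, Real.pi_ne_zero] at hconst

theorem isStarProjection_bottProjection (v : TwoSphere) : IsStarProjection (bottProjection v) := by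
  have hv : (v.1 0 : ℂ) ^ 2 + (v.1 1 : ℂ) ^ 2 + (v.1 2 : ℂ) ^ 2 = 1 := by exact_mod_cast v.2
  constructor
  · ext i j
    fin_cases i <;> fin_cases j <;>
      simp [bottProjection, Matrix.mul_apply, Fin.sum_univ_two] <;>
      first
        | ring1
        | linear_combination hv / 4 - (v.1 2 : ℂ) ^ 2 / 4 * Complex.I_sq
  · ext i j
    fin_cases i <;> fin_cases j <;>
      simp [bottProjection, Complex.conj_ofReal, sub_eq_add_neg]

section FixedVector

variable {v : TwoSphere} {x : Fin 2 → ℂ}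

theorem eqs_of_bottProjection_mulVec_eq_self (hx : bottProjection v *ᵥ x = x) :
    (1 - (v.1 0 : ℂ)) * x 0 = ((v.1 1 : ℂ) - Complex.I * (v.1 2 : ℂ)) * x 1 ∧
      (1 + (v.1 0 : ℂ)) * x 1 = ((v.1 1 : ℂ) + Complex.I * (v.1 2 : ℂ)) * x 0 := by
  have h₀ := congrFun hx 0
  have h₁ := congrFun hx 1
  simp [bottProjection, mulVec, dotProduct, Fin.sum_univ_two] at h₀ h₁
  constructor
  · linear_combination (-2 : ℂ) * h₀
  · linear_combination (-2 : ℂ) * h₁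

theorem apply_zero_ne_zero_of_bottProjection_mulVec_eq_self (hx : bottProjection v *ᵥ x = x)
    (hx₀ : x ≠ 0) (hv : 0 ≤ v.1 0) : x 0 ≠ 0 := by
  intro h₀
  have h₁ : (1 + (v.1 0 : ℂ)) * x 1 = 0 := by
    simpa [h₀] using (eqs_of_bottProjection_mulVec_eq_self hx).2
  have hcoef : (1 + (v.1 0 : ℂ)) ≠ 0 := by exact_mod_cast (by linarith : (1 + v.1 0) ≠ 0)
  exact hx₀ (funext fun i => by fin_cases i <;> simp [h₀, (mul_eq_zero.mp h₁).resolve_left hcoef])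

theorem apply_one_ne_zero_of_bottProjection_mulVec_eq_self (hx : bottProjection v *ᵥ x = x)
    (hx₀ : x ≠ 0) (hv : v.1 0 ≤ 0) : x 1 ≠ 0 := by
  intro h₁
  have h₀ : (1 - (v.1 0 : ℂ)) * x 0 = 0 := by
    simpa [h₁] using (eqs_of_bottProjection_mulVec_eq_self hx).1
  have hcoef : (1 - (v.1 0 : ℂ)) ≠ 0 := by exact_mod_cast (by linarith : (1 - v.1 0) ≠ 0)
  exact hx₀ (funext fun i => by fin_cases i <;> simp [h₁, (mul_eq_zero.mp h₀).resolve_left hcoef])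

theorem apply_zero_eq_of_bottProjection_mulVec_eq_self (hx : bottProjection v *ᵥ x = x)
    (hv : v.1 0 = 0) : x 0 = ((v.1 1 : ℂ) - Complex.I * (v.1 2 : ℂ)) * x 1 := by
  simpa [hv] using (eqs_of_bottProjection_mulVec_eq_self hx).1

end FixedVector

noncomputable def hemisphereChart (ε : ℝ) (hε : ε ^ 2 = 1) (w : closedBall (0 : ℂ) 1) :
    TwoSphere :=
  ⟨![ε * √(1 - ‖(w : ℂ)‖ ^ 2), (w : ℂ).re, (w : ℂ).im], by
    have hw : ‖(w : ℂ)‖ ≤ 1 := mem_closedBall_zero_iff.mp w.2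
    have hsq : ‖(w : ℂ)‖ ^ 2 = (w : ℂ).re ^ 2 + (w : ℂ).im ^ 2 := by
      rw [Complex.sq_norm, Complex.normSq_apply]; ring
    simp only [Matrix.cons_val_zero, Matrix.cons_val_one, Matrix.cons_val_two, Matrix.head_cons,
      Matrix.tail_cons, mul_pow, hε, one_mul]
    rw [Real.sq_sqrt (by nlinarith [norm_nonneg (w : ℂ)])]
    linarith⟩

section HemisphereChart

variable {ε : ℝ} {w : closedBall (0 : ℂ) 1}

theorem continuous_hemisphereChart (hε : ε ^ 2 = 1) : Continuous (hemisphereChart ε hε) := by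
  unfold hemisphereChart
  fun_prop

theorem hemisphereChart_apply_zero_of_norm_eq_one (hε : ε ^ 2 = 1) (hw : ‖(w : ℂ)‖ = 1) :
    (hemisphereChart ε hε w).1 0 = 0 := by
  simp [hemisphereChart, hw]

theorem hemisphereChart_eq_of_norm_eq_one {ε' : ℝ} (hε : ε ^ 2 = 1) (hε' : ε' ^ 2 = 1)
    (hw : ‖(w : ℂ)‖ = 1) : hemisphereChart ε hε w = hemisphereChart ε' hε' w := by
  ext i
  fin_cases i <;> simp [hemisphereChart, hw]

theorem hemisphereChart_sub_I_mul (hε : ε ^ 2 = 1) (w : closedBall (0 : ℂ) 1) :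
    ((hemisphereChart ε hε w).1 1 : ℂ) - Complex.I * (hemisphereChart ε hε w).1 2 =
      starRingEnd ℂ w := by
  apply Complex.ext <;> simp [hemisphereChart]

end HemisphereChart

theorem exists_eq_zero_of_bottProjection_mulVec_eq_self (s : TwoSphere → Fin 2 → ℂ)
    (hs : Continuous s) (hsec : ∀ v, bottProjection v *ᵥ s v = s v) : ∃ v, s v = 0 := by
  by_contra! hne
  have hD : (closedBall (0 : ℂ) 1).Nonempty := nonempty_closedBall.mpr zero_le_one
  have hε₀ : (1 : ℝ) ^ 2 = 1 := one_pow 2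
  have hε₁ : (-1 : ℝ) ^ 2 = 1 := neg_one_sq
  obtain ⟨L₀, hL₀, hexp₀⟩ := (convex_closedBall (0 : ℂ) 1).exists_continuous_exp_eq hD
    (f := fun w => s (hemisphereChart 1 hε₀ w) 0)
    (by have := continuous_hemisphereChart hε₀; fun_prop)
    fun w => apply_zero_ne_zero_of_bottProjection_mulVec_eq_self (hsec _) (hne _)
      (mul_nonneg zero_le_one (Real.sqrt_nonneg _))
  obtain ⟨L₁, hL₁, hexp₁⟩ := (convex_closedBall (0 : ℂ) 1).exists_continuous_exp_eq hD
    (f := fun w => s (hemisphereChart (-1) hε₁ w) 1)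
    (by have := continuous_hemisphereChart hε₁; fun_prop)
    fun w => apply_one_ne_zero_of_bottProjection_mulVec_eq_self (hsec _) (hne _)
      (by simp [hemisphereChart, Real.sqrt_nonneg])
  let ι : Circle → closedBall (0 : ℂ) 1 := fun z => ⟨z, sphere_subset_closedBall z.2⟩
  refine Circle.not_exists_continuous_exp_eq ⟨fun z => L₁ (ι z) - L₀ (ι z), by fun_prop, fun z => ?_⟩
  have hz : ‖(ι z : ℂ)‖ = 1 := Circle.norm_coe z
  have hequator := apply_zero_eq_of_bottProjection_mulVec_eq_self (hsec _)
    (hemisphereChart_apply_zero_of_norm_eq_one hε₁ hz)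
  have hconj : starRingEnd ℂ (ι z : ℂ) = (z : ℂ)⁻¹ := (Circle.coe_inv_eq_conj z).symm
  rw [hemisphereChart_sub_I_mul, hconj] at hequator
  have hne₁ : s (hemisphereChart (-1) hε₁ (ι z)) 1 ≠ 0 := hexp₁ (ι z) ▸ Complex.exp_ne_zero _
  rw [Complex.exp_sub, hexp₀, hexp₁, hemisphereChart_eq_of_norm_eq_one hε₀ hε₁ hz, hequator]
  field_simp

/-- The vector bundle associated to the Bott projection admits no
nowhere-zero continuous section; equivalently, `e₁₁ ⋠ p` in `M₂(C(S²))`. -/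
theorem stmt_6 :
    (∀ s : TwoSphere → Fin 2 → ℂ, Continuous s →
      (∀ v, bottProjection v *ᵥ s v = s v) → ∃ v, s v = 0) ∧
    ¬ (∃ w : TwoSphere → Matrix (Fin 2) (Fin 2) ℂ, Continuous w ∧
        (∀ v, (w v)ᴴ * w v = Matrix.single 0 0 1) ∧
        (∀ v, (bottProjection v - w v * (w v)ᴴ).PosSemidef)) := by
  refine ⟨exists_eq_zero_of_bottProjection_mulVec_eq_self, ?_⟩
  rintro ⟨w, hw, hiso, hpsd⟩
  obtain ⟨v, hv⟩ := exists_eq_zero_of_bottProjection_mulVec_eq_self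
    (fun v => w v *ᵥ Pi.single 0 1) (by fun_prop) fun v =>
      (isStarProjection_bottProjection v).mulVec_eq_self_of_posSemidef_sub (hpsd v)
        (mul_conjTranspose_mulVec_mulVec_single_of_conjTranspose_mul_self_eq_single (hiso v))
  exact mulVec_single_ne_zero_of_conjTranspose_mul_self_eq_single (hiso v) hv
end

section
/- Let A be a unital C*-algebra and let (Aₙ)_{n=1}^∞ be an increasing sequence of unital C*-subalgebras of A (each containing the unit of A) whose union is dense in A. Let m ∈ ℕ. If every Aₙ fails property C_m, then A fails property C_m; equivalently, if there exist x₁,…,x_m, a₁,…,a_m, b₁,…,b_m, y₁,…,y_m ∈ A with 1 = Σ_{i=1}^m xᵢ(aᵢbᵢ − bᵢaᵢ)yᵢ, then for some n there exist such elements in Aₙ. -/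
/-- Let `A` be a unital C*-algebra and `(Bₙ)` an increasing sequence of
unital (closed, star) C*-subalgebras whose union is dense in `A`.  If every `Bₙ` fails
property `C_m`, then `A` fails property `C_m`. -/
theorem stmt_10 (A : Type*) [CStarAlgebra A] (m : ℕ)
    (B : ℕ → StarSubalgebra ℂ A)
    (hclosed : ∀ n, IsClosed (B n : Set A))
    (hmono : Monotone B)
    (hdense : Dense (⋃ n, (B n : Set A)))
    (hfail : ∀ n, ¬ ∃ x a b y : Fin m → A,
      (∀ i, x i ∈ B n ∧ a i ∈ B n ∧ b i ∈ B n ∧ y i ∈ B n) ∧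
      (1 : A) = ∑ i, x i * (a i * b i - b i * a i) * y i) :
    ¬ ∃ x a b y : Fin m → A,
      (1 : A) = ∑ i, x i * (a i * b i - b i * a i) * y i := by
  rintro ⟨x, a, b, y, hxy⟩
  -- approximate each element by sequences in the union
  have happrox : ∀ c : A, ∃ u : ℕ → A, (∀ k, u k ∈ ⋃ n, (B n : Set A)) ∧
      Filter.Tendsto u Filter.atTop (nhds c) := by
    intro c
    have : c ∈ closure (⋃ n, (B n : Set A)) := hdense c
    exact mem_closure_iff_seq_limit.mp this
  choose ux hux hux' using fun i => happrox (x i)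
  choose ua hua hua' using fun i => happrox (a i)
  choose ub hub hub' using fun i => happrox (b i)
  choose uy huy huy' using fun i => happrox (y i)
  set z : ℕ → A := fun k => ∑ i, ux i k * (ua i k * ub i k - ub i k * ua i k) * uy i k
    with hz
  have hzt : Filter.Tendsto z Filter.atTop (nhds (1 : A)) := by
    rw [hxy]
    exact tendsto_finset_sum _ fun i _ =>
      (((hux' i).mul (((hua' i).mul (hub' i)).sub ((hub' i).mul (hua' i)))).mul (huy' i))
  have hlt : ∀ᶠ k in Filter.atTop, ‖z k - 1‖ < 1 := by
    have := hzt.sub_const (1 : A)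
    rw [sub_self] at this
    have := (continuous_norm.tendsto (0 : A)).comp this
    simp only [norm_zero] at this
    exact this.eventually_lt_const one_pos
  obtain ⟨k, hk⟩ := hlt.exists
  -- find a common subalgebra containing all the approximants
  choose nx hnx using fun i => Set.mem_iUnion.mp (hux i k)
  choose na hna using fun i => Set.mem_iUnion.mp (hua i k)
  choose nb hnb using fun i => Set.mem_iUnion.mp (hub i k)
  choose ny hny using fun i => Set.mem_iUnion.mp (huy i k)
  set N : ℕ := Finset.univ.sup (fun i : Fin m => max (max (nx i) (na i)) (max (nb i) (ny i)))
  have hN : ∀ i : Fin m, ux i k ∈ B N ∧ ua i k ∈ B N ∧ ub i k ∈ B N ∧ uy i k ∈ B N := by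
    intro i
    have hle : max (max (nx i) (na i)) (max (nb i) (ny i)) ≤ N :=
      Finset.le_sup (f := fun i : Fin m => max (max (nx i) (na i)) (max (nb i) (ny i))) (Finset.mem_univ i)
    refine ⟨hmono (le_trans (le_trans (le_max_left _ _) (le_max_left _ _)) hle) (hnx i),
      hmono (le_trans (le_trans (le_max_right _ _) (le_max_left _ _)) hle) (hna i),
      hmono (le_trans (le_trans (le_max_left _ _) (le_max_right _ _)) hle) (hnb i),
      hmono (le_trans (le_trans (le_max_right _ _) (le_max_right _ _)) hle) (hny i)⟩
  have hzmem : z k ∈ B N := by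
    refine Subalgebra.sum_mem _ fun i _ => ?_
    obtain ⟨h1, h2, h3, h4⟩ := hN i
    exact mul_mem (mul_mem h1 (sub_mem (mul_mem h2 h3) (mul_mem h3 h2))) h4
  -- z k is a unit in A, hence in B N by spectral permanence
  have hunitA : IsUnit (z k) := by
    have : z k = 1 - (1 - z k) := (sub_sub_cancel 1 (z k)).symm
    rw [this]
    exact (Units.oneSub (1 - z k) (by rwa [norm_sub_rev] at hk)).isUnit
  letI : IsClosed ((B N : Set A)) := hclosed N
  have hunitS : IsUnit (⟨z k, hzmem⟩ : B N) :=
    (StarSubalgebra.coe_isUnit (B N)).mp hunitA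
  obtain ⟨u, hu⟩ := hunitS
  -- w is the inverse of z k, living in B N
  set w : A := (((u⁻¹ : (B N)ˣ) : B N) : A) with hw
  have hwmem : w ∈ B N := ((u⁻¹ : (B N)ˣ) : B N).2
  have hwz : w * z k = 1 := by
    have : ((u⁻¹ : (B N)ˣ) : B N) * (u : B N) = 1 := u.inv_mul
    rw [hu] at this
    exact congrArg (Subtype.val) this
  refine hfail N ⟨fun i => w * ux i k, fun i => ua i k, fun i => ub i k, fun i => uy i k,
    fun i => ?_, ?_⟩
  · obtain ⟨h1, h2, h3, h4⟩ := hN i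
    exact ⟨mul_mem hwmem h1, h2, h3, h4⟩
  · rw [← hwz, hz]
    simp only [Finset.mul_sum]
    exact Finset.sum_congr rfl fun i _ => by rw [← mul_assoc, ← mul_assoc]
end
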